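/- For every dominant weight λ, the set of extreme points (vertices) of IP_λ is exactly the set of points v_{I,J}(λ), as (I, J) ranges over all pairs of disjoint subsets with I ∪ J = {1, …, r}. -/

import Mathlib

/-- The intersection polytope `IP_lam`: the set of dominant weights `μ` such that
`lam - μ` is a nonnegative rational combination of the simple roots. -/
def IP {V : Type*} [AddCommGroup V] [Module ℚ V] {r : ℕ}
    (b : Fin r → V) (coroot : Fin r → Module.Dual ℚ V) (lam : V) : Set V :=
  {μ | (∀ i, 0 ≤ coroot i μ) ∧
    ∃ c : Fin r → ℚ, (∀ i, 0 ≤ c i) ∧ lam - μ = ∑ i, c i • b i}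

/-!
`IP_lam` is the polyhedron cut out by the `2r` inequalities `⟨μ, α_i^∨⟩ ≥ 0` and
`⟨lam - μ, x_i⟩ ≥ 0`, so `μ` is a vertex iff no nonzero vector is killed by all constraints
active at `μ`. Averaging a positive definite form over the group of automorphisms preserving
`Φ` (finite, as `Φ` is finite and spanning, and containing the simple reflections) gives a form
`B` with `B v α_k = d_k ⟨v, α_k^∨⟩` and `d_k > 0`. If every index carries an active constraint,
then `B w w = ∑ ⟨w, x_i⟩ B w α_i = 0` for `w` in the common kernel, and the coordinates of
`lam - μ` are nonnegative because `B` is nonpositive off the diagonal (a Stieltjes form).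
Conversely, if both constraints of some index `k` are inactive, dominance of `lam` makes each
active `⟨·, α_i^∨⟩` with `⟨lam - μ, x_i⟩ = 0` a consequence of the constraints `⟨·, x_j⟩ = 0`,
leaving fewer than `r` independent active constraints.
-/

open Module Finset

section Polyhedron

variable {𝕜 E ι : Type*} [Field 𝕜] [LinearOrder 𝕜] [IsStrictOrderedRing 𝕜]
  [AddCommGroup E] [Module 𝕜 E] (φ : ι → Dual 𝕜 E) (c : ι → 𝕜) {μ : E}

theorem eq_zero_of_mem_extremePoints_setOf_le [Finite ι]
    (hμ : μ ∈ {y | ∀ k, c k ≤ φ k y}.extremePoints 𝕜) {w : E}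
    (hw : ∀ k, φ k μ = c k → φ k w = 0) : w = 0 := by
  obtain ⟨hμP, hμ⟩ := hμ
  have : Nonempty {q : 𝕜 // 0 < q} := ⟨⟨1, one_pos⟩⟩
  obtain ⟨⟨ε, hε⟩, hεle⟩ := Finite.exists_ge fun k : {k // c k < φ k μ} =>
    (⟨(φ k μ - c k) / (|φ k w| + 1), div_pos (sub_pos.2 k.2) (by positivity)⟩ : {q : 𝕜 // 0 < q})
  have hsmall : ∀ k, |ε * φ k w| ≤ φ k μ - c k := by
    intro k
    rcases (hμP k).eq_or_lt with hk | hk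
    · rw [hw k hk.symm, mul_zero, abs_zero, hk, sub_self]
    · have h := le_div_iff₀ (by positivity) |>.1 (Subtype.coe_le_coe.2 (hεle ⟨k, hk⟩))
      rw [abs_mul, abs_of_pos hε]
      nlinarith
  have hplus : μ + ε • w ∈ {y | ∀ k, c k ≤ φ k y} := fun k => by
    have := (abs_le.1 (hsmall k)).1
    simp only [map_add, map_smul, smul_eq_mul]
    linarith
  have hminus : μ - ε • w ∈ {y | ∀ k, c k ≤ φ k y} := fun k => by
    have := (abs_le.1 (hsmall k)).2
    simp only [map_sub, map_smul, smul_eq_mul]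
    linarith
  have hseg : μ ∈ openSegment 𝕜 (μ + ε • w) (μ - ε • w) :=
    ⟨1 / 2, 1 / 2, by norm_num, by norm_num, by norm_num, by module⟩
  simpa [hε.ne'] using hμ hplus hminus hseg

theorem mem_extremePoints_setOf_le (hμ : ∀ k, c k ≤ φ k μ)
    (h : ∀ w, (∀ k, φ k μ = c k → φ k w = 0) → w = 0) :
    μ ∈ {y | ∀ k, c k ≤ φ k y}.extremePoints 𝕜 := by
  refine ⟨hμ, fun x₁ hx₁ x₂ hx₂ ⟨s, u, hs, hu, hsu, hx⟩ => sub_eq_zero.1 (h _ fun k hk => ?_)⟩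
  have hsplit : s * (φ k x₁ - c k) + u * (φ k x₂ - c k) = 0 := by
    have := congrArg (φ k) hx
    simp only [map_add, map_smul, smul_eq_mul] at this
    linear_combination this + hk - c k * hsu
  have h₁ := ((add_eq_zero_iff_of_nonneg (mul_nonneg hs.le (sub_nonneg.2 (hx₁ k)))
    (mul_nonneg hu.le (sub_nonneg.2 (hx₂ k)))).1 hsplit).1
  rw [map_sub, hk, ← mul_right_inj' hs.ne', h₁, mul_zero]

theorem mem_extremePoints_setOf_le_iff [Finite ι] :
    μ ∈ {y | ∀ k, c k ≤ φ k y}.extremePoints 𝕜 ↔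
      (∀ k, c k ≤ φ k μ) ∧ ∀ w, (∀ k, φ k μ = c k → φ k w = 0) → w = 0 :=
  ⟨fun hμ => ⟨hμ.1, fun _ => eq_zero_of_mem_extremePoints_setOf_le φ c hμ⟩,
    fun h => mem_extremePoints_setOf_le φ c h.1 h.2⟩

end Polyhedron

section InvariantForm

open Pointwise

theorem finite_stabilizer_of_span_eq_top {R M : Type*} [Ring R] [AddCommGroup M] [Module R M]
    {Φ : Set M} (hΦ : Φ.Finite) (hspan : Submodule.span R Φ = ⊤) :
    Finite (MulAction.stabilizer (M ≃ₗ[R] M) Φ) := by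
  have := hΦ.to_subtype
  refine Finite.of_injective (β := Φ → Φ) (fun g p => ⟨g.1 p, ?_⟩) fun g h hgh => ?_
  · exact (MulAction.mem_stabilizer_iff.1 g.2).subset (Set.smul_mem_smul_set p.2)
  · exact Subtype.ext <| LinearEquiv.toLinearMap_injective <|
      LinearMap.ext_on hspan fun v hv => congrArg Subtype.val (congrFun hgh ⟨v, hv⟩)

theorem two_mul_apply_eq_of_reflection_invariant {R M : Type*} [CommRing R] [AddCommGroup M]
    [Module R M] {B : LinearMap.BilinForm R M} {x : M} {f : Dual R M} (h : f x = 2)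
    (hB : ∀ v w, B (reflection h v) (reflection h w) = B v w) (v : M) :
    2 * B v x = f v * B x x := by
  have := hB v x
  simp only [reflection_apply, map_sub, map_smul, LinearMap.sub_apply, LinearMap.smul_apply,
    smul_eq_mul, h] at this
  linear_combination -this

variable {𝕜 V : Type*} [Field 𝕜] [LinearOrder 𝕜] [IsStrictOrderedRing 𝕜]
  [AddCommGroup V] [Module 𝕜 V]

theorem exists_posDef_bilinForm_invariant [FiniteDimensional 𝕜 V]
    (G : Subgroup (V ≃ₗ[𝕜] V)) [Finite G] :
    ∃ B : LinearMap.BilinForm 𝕜 V,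
      (∀ v, v ≠ 0 → 0 < B v v) ∧ ∀ g ∈ G, ∀ v w, B (g v) (g w) = B v w := by
  have := Fintype.ofFinite G
  let e : V →ₗ[𝕜] Fin (finrank 𝕜 V) → 𝕜 := (finBasis 𝕜 V).equivFun
  let B₀ : LinearMap.BilinForm 𝕜 V := (dotProductBilin 𝕜 𝕜).compl₁₂ e e
  have hB₀ : ∀ v, v ≠ 0 → 0 < B₀ v v := fun v hv => by
    have he : e v ≠ 0 := by simpa [e] using hv
    show 0 < e v ⬝ᵥ e v
    exact lt_of_le_of_ne (Finset.sum_nonneg fun i _ => mul_self_nonneg _)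
      (Ne.symm (mt dotProduct_self_eq_zero.1 he))
  refine ⟨∑ g : G, B₀.compl₁₂ (g : V →ₗ[𝕜] V) (g : V →ₗ[𝕜] V), fun v hv => ?_, fun h hh v w => ?_⟩
  · simp only [LinearMap.sum_apply, LinearMap.compl₁₂_apply]
    exact Finset.sum_pos (fun g _ => hB₀ _ (by simpa using hv)) univ_nonempty
  · simp only [LinearMap.sum_apply, LinearMap.compl₁₂_apply]
    exact Fintype.sum_equiv (Equiv.mulRight ⟨h, hh⟩) _ _ fun g => by
      simp only [Equiv.coe_mulRight, Subgroup.coe_mul, LinearEquiv.coe_coe, LinearEquiv.mul_apply]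

theorem exists_posDef_bilinForm_apply_eq_mul_coroot {ι : Type*} [Fintype ι] (b : Basis ι 𝕜 V)
    (coroot : ι → Dual 𝕜 V) (hdiag : ∀ i, coroot i (b i) = 2) (Φ : Set V) (hΦ : Φ.Finite)
    (hroot : ∀ i, b i ∈ Φ) (hrefl : ∀ β ∈ Φ, ∀ i, β - coroot i β • b i ∈ Φ) :
    ∃ B : LinearMap.BilinForm 𝕜 V, (∀ v, v ≠ 0 → 0 < B v v) ∧
      ∃ d : ι → 𝕜, (∀ k, 0 < d k) ∧ ∀ k v, B v (b k) = d k * coroot k v := by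
  have := Module.Finite.of_basis b
  have hspan : Submodule.span 𝕜 Φ = ⊤ :=
    eq_top_iff.2 (b.span_eq ▸ Submodule.span_mono (Set.range_subset_iff.2 hroot))
  have := finite_stabilizer_of_span_eq_top hΦ hspan
  obtain ⟨B, hB, hinv⟩ := exists_posDef_bilinForm_invariant (MulAction.stabilizer (V ≃ₗ[𝕜] V) Φ)
  have hmem : ∀ k, reflection (hdiag k) ∈ MulAction.stabilizer (V ≃ₗ[𝕜] V) Φ := fun k =>
    (bijOn_reflection_of_mapsTo (hdiag k) fun β hβ => hrefl β hβ k).image_eq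
  refine ⟨B, hB, fun k => B (b k) (b k) / 2, fun k => half_pos (hB _ (b.ne_zero k)),
    fun k v => ?_⟩
  linear_combination two_mul_apply_eq_of_reflection_invariant (hdiag k) (hinv _ (hmem k)) v / 2

end InvariantForm

section Coordinates

variable {𝕜 V ι : Type*} [AddCommGroup V] [Fintype ι]

theorem Module.Basis.dual_apply_eq_sum [CommRing 𝕜] [Module 𝕜 V] (b : Basis ι 𝕜 V)
    (f : Dual 𝕜 V) (v : V) : f v = ∑ j, b.repr v j * f (b j) := by
  conv_lhs => rw [← b.sum_repr v]
  simp only [map_sum, map_smul, smul_eq_mul]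

theorem Module.Basis.eq_zero_of_forall_apply_eq_zero_or_repr_eq_zero [CommRing 𝕜]
    [PartialOrder 𝕜] [Module 𝕜 V] (b : Basis ι 𝕜 V) {B : LinearMap.BilinForm 𝕜 V}
    (hB : ∀ v, v ≠ 0 → 0 < B v v) {w : V} (h : ∀ i, B w (b i) = 0 ∨ b.repr w i = 0) :
    w = 0 := by
  by_contra hw
  refine (hB w hw).ne' ?_
  rw [b.dual_apply_eq_sum (B w)]
  exact Finset.sum_eq_zero fun i _ => by rcases h i with h | h <;> simp [h]

variable [CommRing 𝕜] [LinearOrder 𝕜] [IsStrictOrderedRing 𝕜] [Module 𝕜 V] (b : Basis ι 𝕜 V)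
  {B : LinearMap.BilinForm 𝕜 V}

theorem Module.Basis.repr_nonneg_of_apply_nonneg (hB : ∀ v, v ≠ 0 → 0 < B v v)
    (hoff : ∀ i j, i ≠ j → B (b i) (b j) ≤ 0) {v : V}
    (hv : ∀ i, b.repr v i < 0 → 0 ≤ B v (b i)) (i : ι) : 0 ≤ b.repr v i := by
  -- For the negative part `n` of `v`, `B n n = B v n - B p n ≤ 0`.
  set p : V := ∑ j, max (b.repr v j) 0 • b j
  set n : V := ∑ j, min (b.repr v j) 0 • b j
  have hvpn : v = p + n := by
    rw [← Finset.sum_add_distrib]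
    conv_lhs => rw [← b.sum_repr v]
    exact Finset.sum_congr rfl fun j _ => by rw [← add_smul, max_add_min, add_zero]
  have hvn : B v n ≤ 0 := by
    simp only [n, map_sum, map_smul, smul_eq_mul]
    refine Finset.sum_nonpos fun j _ => ?_
    rcases lt_or_ge (b.repr v j) 0 with h | h
    · exact mul_nonpos_of_nonpos_of_nonneg (min_le_right _ _) (hv j h)
    · rw [min_eq_right h, zero_mul]
  have hpn : 0 ≤ B p n := by
    simp only [p, n, map_sum, map_smul, LinearMap.sum_apply, LinearMap.smul_apply, smul_eq_mul,
      Finset.mul_sum]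
    refine Finset.sum_nonneg fun k _ => Finset.sum_nonneg fun j _ => ?_
    rcases eq_or_ne j k with rfl | hjk
    · rcases le_total (b.repr v j) 0 with h | h
      · rw [max_eq_right h, zero_mul, mul_zero]
      · rw [min_eq_right h, zero_mul]
    · exact mul_nonneg_of_nonpos_of_nonpos (min_le_right _ _)
        (mul_nonpos_of_nonneg_of_nonpos (le_max_right _ _) (hoff j k hjk))
  have hn : n = 0 := by
    by_contra hn
    have := hB n hn
    rw [hvpn, map_add, LinearMap.add_apply] at hvn
    linarith
  have := congrArg (fun u => b.repr u i) hn
  simp only [n, b.repr_sum_self, map_zero, Finsupp.coe_zero, Pi.zero_apply] at this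
  exact min_eq_right_iff.1 this

end Coordinates

theorem exists_ne_zero_forall_dual_apply_eq_zero {K V κ : Type*} [Field K] [AddCommGroup V]
    [Module K V] [FiniteDimensional K V] [Fintype κ] (ψ : κ → Dual K V)
    (h : Fintype.card κ < finrank K V) : ∃ w ≠ 0, ∀ k, ψ k w = 0 := by
  obtain ⟨w, hw, hw0⟩ := Submodule.exists_mem_ne_zero_of_ne_bot
    (LinearMap.ker_ne_bot_of_finrank_lt (f := LinearMap.pi ψ) (by simpa using h))
  exact ⟨w, hw0, fun k => congrFun (LinearMap.mem_ker.1 hw) k⟩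

section CartanMatrix

variable {𝕜 V ι : Type*} [Field 𝕜] [LinearOrder 𝕜] [IsStrictOrderedRing 𝕜]
  [AddCommGroup V] [Module 𝕜 V] (b : Basis ι 𝕜 V) (coroot : ι → Dual 𝕜 V)

theorem repr_mul_coroot_nonpos (hoff : ∀ i j, i ≠ j → coroot j (b i) ≤ 0) {v : V}
    (hv : ∀ j, 0 ≤ b.repr v j) {i : ι} (hi : b.repr v i = 0) (j : ι) :
    b.repr v j * coroot i (b j) ≤ 0 := by
  rcases eq_or_ne j i with rfl | hji
  · rw [hi, zero_mul]
  · exact mul_nonpos_of_nonneg_of_nonpos (hv j) (hoff j i hji)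

variable [Fintype ι]

theorem coroot_apply_nonpos (hoff : ∀ i j, i ≠ j → coroot j (b i) ≤ 0) {v : V}
    (hv : ∀ j, 0 ≤ b.repr v j) {i : ι} (hi : b.repr v i = 0) : coroot i v ≤ 0 := by
  rw [b.dual_apply_eq_sum]
  exact Finset.sum_nonpos fun j _ => repr_mul_coroot_nonpos b coroot hoff hv hi j

theorem coroot_apply_eq_zero_of_repr_ne_zero (hoff : ∀ i j, i ≠ j → coroot j (b i) ≤ 0)
    {v : V} (hv : ∀ j, 0 ≤ b.repr v j) {i : ι} (hi : b.repr v i = 0) (hvi : 0 ≤ coroot i v)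
    {j : ι} (hj : b.repr v j ≠ 0) : coroot i (b j) = 0 := by
  have hsum : ∑ j, b.repr v j * coroot i (b j) = 0 := by
    rw [← b.dual_apply_eq_sum]
    exact le_antisymm (coroot_apply_nonpos b coroot hoff hv hi) hvi
  have hterm := (Finset.sum_eq_zero_iff_of_nonpos fun j _ =>
    repr_mul_coroot_nonpos b coroot hoff hv hi j).1 hsum j (Finset.mem_univ j)
  exact (mul_eq_zero.1 hterm).resolve_left hj

theorem exists_ne_zero_of_coroot_ne_zero_of_repr_ne_zero
    (hoff : ∀ i j, i ≠ j → coroot j (b i) ≤ 0) {lam μ : V} (hlam : ∀ i, 0 ≤ coroot i lam)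
    (hc : ∀ j, 0 ≤ b.repr (lam - μ) j) {k : ι} (hkμ : coroot k μ ≠ 0)
    (hkc : b.repr (lam - μ) k ≠ 0) :
    ∃ w ≠ 0, (∀ i, coroot i μ = 0 → coroot i w = 0) ∧
      ∀ j, b.repr (lam - μ) j = 0 → b.repr w j = 0 := by
  classical
  have := Module.Finite.of_basis b
  set c := b.repr (lam - μ)
  let T := univ.filter fun i => coroot i μ = 0 ∧ c i ≠ 0
  let Z := univ.filter fun j => c j = 0
  have hcard : Fintype.card (T ⊕ Z) < finrank 𝕜 V := by
    rw [Fintype.card_sum, Fintype.card_coe, Fintype.card_coe,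
      ← card_union_of_disjoint (disjoint_filter.2 fun i _ h h' => h.2 h'),
      finrank_eq_card_basis b]
    exact card_lt_univ_of_notMem (x := k) (by simp [hkμ, hkc])
  obtain ⟨w, hw, hψ⟩ := exists_ne_zero_forall_dual_apply_eq_zero
    (Sum.elim (fun i : T => coroot i) fun j : Z => b.coord j) hcard
  have hZ : ∀ j, c j = 0 → b.repr w j = 0 := fun j hj => by
    simpa using hψ (.inr ⟨j, by simp [Z, hj]⟩)
  refine ⟨w, hw, fun i hi => ?_, hZ⟩
  by_cases hci : c i = 0
  · have hi' : 0 ≤ coroot i (lam - μ) := by rw [map_sub, hi, sub_zero]; exact hlam i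
    rw [b.dual_apply_eq_sum]
    refine Finset.sum_eq_zero fun j _ => ?_
    by_cases hcj : c j = 0
    · rw [hZ j hcj, zero_mul]
    · rw [coroot_apply_eq_zero_of_repr_ne_zero b coroot hoff hc hci hi' hcj, mul_zero]
  · exact hψ (.inl ⟨i, by simp [T, hi, hci]⟩)

theorem nonneg_of_forall_coroot_eq_zero_or_repr_eq_zero {B : LinearMap.BilinForm 𝕜 V}
    (hB : ∀ v, v ≠ 0 → 0 < B v v) {d : ι → 𝕜} (hd : ∀ k, 0 < d k)
    (hBd : ∀ k v, B v (b k) = d k * coroot k v) (hoff : ∀ i j, i ≠ j → coroot j (b i) ≤ 0)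
    {lam μ : V} (hlam : ∀ i, 0 ≤ coroot i lam)
    (h : ∀ i, coroot i μ = 0 ∨ b.repr (lam - μ) i = 0) :
    (∀ i, 0 ≤ coroot i μ) ∧ ∀ i, 0 ≤ b.repr (lam - μ) i := by
  have hc : ∀ i, 0 ≤ b.repr (lam - μ) i := by
    refine b.repr_nonneg_of_apply_nonneg hB (fun i j hij => ?_) fun i hi => ?_
    · rw [hBd]
      exact mul_nonpos_of_nonneg_of_nonpos (hd j).le (hoff i j hij)
    · rw [hBd, map_sub, (h i).resolve_right hi.ne, sub_zero]
      exact mul_nonneg (hd i).le (hlam i)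
  refine ⟨fun i => ?_, hc⟩
  rcases h i with hμ | hci
  · exact hμ.ge
  · have := coroot_apply_nonpos b coroot hoff hc hci
    rw [map_sub] at this
    linarith [hlam i]

end CartanMatrix

theorem exists_partition_iff_forall_or {ι : Type*} [Fintype ι] [DecidableEq ι]
    {p q : ι → Prop} :
    (∃ I J : Finset ι, Disjoint I J ∧ I ∪ J = univ ∧ (∀ i ∈ I, p i) ∧ ∀ j ∈ J, q j) ↔
      ∀ i, p i ∨ q i := by
  classical
  constructor
  · rintro ⟨I, J, -, hIJ, hI, hJ⟩ i
    rcases mem_union.1 (hIJ ▸ mem_univ i) with h | h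
    exacts [.inl (hI i h), .inr (hJ i h)]
  · intro h
    refine ⟨univ.filter p, univ.filter (¬ p ·), disjoint_filter_filter_not _ _ _,
      filter_union_filter_not_eq _ _, fun i hi => (mem_filter.1 hi).2,
      fun j hj => (h j).resolve_left (mem_filter.1 hj).2⟩

section IntersectionPolytope

variable {V : Type*} [AddCommGroup V] [Module ℚ V] {r : ℕ} (b : Basis (Fin r) ℚ V)
  (coroot : Fin r → Dual ℚ V) (lam : V)

theorem mem_IP_iff {μ : V} :
    μ ∈ IP b coroot lam ↔ (∀ i, 0 ≤ coroot i μ) ∧ ∀ i, 0 ≤ b.repr (lam - μ) i := by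
  refine and_congr_right' ⟨?_, fun h => ⟨_, h, (b.sum_repr _).symm⟩⟩
  rintro ⟨c, hc, h⟩
  rwa [h, b.repr_sum_self]

theorem mem_extremePoints_IP_iff {μ : V} :
    μ ∈ (IP b coroot lam).extremePoints ℚ ↔
      ((∀ i, 0 ≤ coroot i μ) ∧ ∀ i, 0 ≤ b.repr (lam - μ) i) ∧
        ∀ w, (∀ i, coroot i μ = 0 → coroot i w = 0) →
          (∀ j, b.repr (lam - μ) j = 0 → b.repr w j = 0) → w = 0 := by
  have hIP : IP b coroot lam = {y | ∀ k, Sum.elim (fun _ => 0) (fun j => -b.repr lam j) k ≤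
      Sum.elim coroot (fun j => -b.coord j) k y} := by
    ext y
    simp [mem_IP_iff, Sum.forall]
  rw [hIP, mem_extremePoints_setOf_le_iff]
  simp [Sum.forall, sub_eq_zero, eq_comm (a := b.repr lam _)]

end IntersectionPolytope

theorem stmt_3_general {V : Type*} [AddCommGroup V] [Module ℚ V] {r : ℕ}
    (b : Module.Basis (Fin r) ℚ V) (coroot : Fin r → Module.Dual ℚ V)
    (hdiag : ∀ i, coroot i (b i) = 2)
    (hoff : ∀ i j : Fin r, i ≠ j → coroot j (b i) ≤ 0)
    (Φ : Set V) (hΦfin : Φ.Finite) (hΦroot : ∀ i, b i ∈ Φ)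
    (hΦrefl : ∀ β ∈ Φ, ∀ i, β - coroot i β • b i ∈ Φ)
    (x : Fin r → Module.Dual ℚ V)
    (hx : ∀ i j : Fin r, x j (b i) = if i = j then 1 else 0)
    (lam : V) (hlam : ∀ i, 0 ≤ coroot i lam) :
    ∀ μ : V, μ ∈ (IP (⇑b) coroot lam).extremePoints ℚ ↔
      ∃ I J : Finset (Fin r), Disjoint I J ∧ I ∪ J = Finset.univ ∧
        (∀ i ∈ I, coroot i μ = 0) ∧ (∀ j ∈ J, x j (lam - μ) = 0) := by
  obtain ⟨B, hB, d, hd, hBd⟩ :=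
    exists_posDef_bilinForm_apply_eq_mul_coroot b coroot hdiag Φ hΦfin hΦroot hΦrefl
  have hxb : ∀ j, x j = b.coord j := fun j => b.ext fun i => by
    simp [hx, Finsupp.single_apply, eq_comm]
  intro μ
  simp only [exists_partition_iff_forall_or, hxb, Basis.coord_apply, mem_extremePoints_IP_iff]
  constructor
  · rintro ⟨⟨-, hc⟩, hker⟩ k
    by_contra! hk
    obtain ⟨w, hw, hwμ, hwc⟩ :=
      exists_ne_zero_of_coroot_ne_zero_of_repr_ne_zero b coroot hoff hlam hc hk.1 hk.2
    exact hw (hker w hwμ hwc)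
  · intro h
    refine ⟨nonneg_of_forall_coroot_eq_zero_or_repr_eq_zero b coroot hB hd hBd hoff hlam h,
      fun w hwμ hwc => b.eq_zero_of_forall_apply_eq_zero_or_repr_eq_zero hB fun i => ?_⟩
    exact (h i).imp (fun hi => by rw [hBd, hwμ i hi, mul_zero]) (hwc i)

/-- For every dominant weight `lam`, the set of extreme points (vertices)
of `IP_lam` is exactly the set of points `v_{I,J}(lam)` (the unique point `v` with
`⟨v, α_i^∨⟩ = 0` for `i ∈ I` and `⟨lam − v, x_j⟩ = 0` for `j ∈ J`), as `(I, J)` ranges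
over all pairs of disjoint subsets with `I ∪ J = {1, …, r}`. -/
theorem stmt_3 {V : Type*} [AddCommGroup V] [Module ℚ V] {r : ℕ}
    (b : Module.Basis (Fin r) ℚ V) (coroot : Fin r → Module.Dual ℚ V)
    (hdiag : ∀ i, coroot i (b i) = 2)
    (hoff : ∀ i j : Fin r, i ≠ j → coroot j (b i) ≤ 0)
    (hint : ∀ i j : Fin r, ∃ n : ℤ, coroot j (b i) = (n : ℚ))
    (Φ : Set V) (hΦfin : Φ.Finite) (hΦroot : ∀ i, b i ∈ Φ)
    (hΦrefl : ∀ β ∈ Φ, ∀ i, β - coroot i β • b i ∈ Φ)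
    (x : Fin r → Module.Dual ℚ V)
    (hx : ∀ i j : Fin r, x j (b i) = if i = j then 1 else 0)
    (lam : V) (hlam : ∀ i, 0 ≤ coroot i lam) :
    ∀ μ : V, μ ∈ (IP (⇑b) coroot lam).extremePoints ℚ ↔
      ∃ I J : Finset (Fin r), Disjoint I J ∧ I ∪ J = Finset.univ ∧
        (∀ i ∈ I, coroot i μ = 0) ∧ (∀ j ∈ J, x j (lam - μ) = 0) :=
  stmt_3_general b coroot hdiag hoff Φ hΦfin hΦroot hΦrefl x hx lam hlam
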